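/- arXiv:2404.04454 — 2 statements merged into one kernel-verified Lean document; each statement's English description precedes it below -/
import Mathlib

section
/- Descent lemma for normalized steepest descent with weight decay: if L is convex with H-Lipschitz gradient w.r.t. norm ‖·‖, x* is a minimizer of L over the ball {‖x‖ ≤ 1/λ}, and x_t = (1 − λη_t)x_{t−1} − η_t Δ_t with Δ_t a unit-norm steepest descent direction, then L(x_t) − L(x*) ≤ (1 − λη_t)(L(x_{t−1}) − L(x*)) + (H/2) η_t² (1 + λ‖x_{t−1}‖)². -/
open scoped RealInnerProductSpace BigOperators
open Filter Finset

/-- `N` is a norm on `ℝ^d`. -/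
def IsNorm {d : ℕ} (N : EuclideanSpace ℝ (Fin d) → ℝ) : Prop :=
  (∀ x, N x = 0 ↔ x = 0) ∧ (∀ (c : ℝ) (x), N (c • x) = |c| * N x) ∧
    (∀ x y, N (x + y) ≤ N x + N y)

/-- `D` is the dual norm of `N`: `D g` is the maximum of `⟪g, x⟫` over the unit ball of `N`
(the supremum is attained in finite dimension). -/
def IsDualNorm {d : ℕ} (N D : EuclideanSpace ℝ (Fin d) → ℝ) : Prop :=
  ∀ g, IsGreatest {r : ℝ | ∃ x, N x ≤ 1 ∧ r = ⟪g, x⟫} (D g)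

/-- `g` is a subgradient of the convex function `f` at `x`. -/
def SubgradientAt {d : ℕ} (f : EuclideanSpace ℝ (Fin d) → ℝ)
    (x g : EuclideanSpace ℝ (Fin d)) : Prop :=
  ∀ y, f x + ⟪y - x, g⟫ ≤ f y

/-!
Write `x = x_{t-1}` and `x_t = x + v` with `v = -λη x - η Δ`, so that `N v ≤ η (1 + λ N x)`
by the triangle inequality. The `H`-Lipschitz gradient gives the usual quadratic upper bound
`L (x + v) ≤ L x + ⟪∇L x, v⟫ + H/2 N(v)²`. Because `Δ` is a steepest descent direction,
`⟪∇L x, v⟫ = -λη ⟪∇L x, x⟫ - η ‖∇L x‖_*`, and convexity together with `N x* ≤ 1/λ` gives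
`L x - L x* ≤ ⟪∇L x, x - x*⟫ ≤ ⟪∇L x, x⟫ + ‖∇L x‖_* / λ`; hence `⟪∇L x, v⟫ ≤ -λη (L x - L x*)`.
-/

section Calculus

variable {F : Type*} [NormedAddCommGroup F] [InnerProductSpace ℝ F] [CompleteSpace F]

open AffineMap in
theorem HasGradientAt.hasDerivAt_comp_lineMap {f : F → ℝ} {g x y : F} {t : ℝ}
    (h : HasGradientAt f g (lineMap x y t)) :
    HasDerivAt (fun s : ℝ => f (lineMap x y s)) ⟪g, y - x⟫ t := by
  simpa [Function.comp_def] using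
    (hasGradientAt_iff_hasFDerivAt.mp h).comp_hasDerivAt t hasDerivAt_lineMap

open AffineMap in
theorem ConvexOn.add_inner_le_of_hasGradientAt {s : Set F} {f : F → ℝ} {g x y : F}
    (hf : ConvexOn ℝ s f) (hx : x ∈ s) (hy : y ∈ s) (hg : HasGradientAt f g x) :
    f x + ⟪g, y - x⟫ ≤ f y := by
  have hline : ConvexOn ℝ (lineMap x y ⁻¹' s) (fun t => f (lineMap x y t)) :=
    hf.comp_affineMap (lineMap x y)
  have hderiv : HasDerivAt (fun t : ℝ => f (lineMap x y t)) ⟪g, y - x⟫ 0 :=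
    HasGradientAt.hasDerivAt_comp_lineMap (by simpa using hg)
  have := hline.le_slope_of_hasDerivAt (by simpa using hx) (by simpa using hy) zero_lt_one hderiv
  rw [slope_def_field] at this
  simp only [lineMap_apply_zero, lineMap_apply_one, sub_zero, div_one] at this
  linarith

end Calculus

theorem le_add_deriv_add_half_of_deriv_sub_le {f f' : ℝ → ℝ} {c : ℝ}
    (hf : ∀ t ∈ Set.Icc (0 : ℝ) 1, HasDerivAt f (f' t) t)
    (hf' : ∀ t ∈ Set.Ioo (0 : ℝ) 1, f' t - f' 0 ≤ c * t) :
    f 1 ≤ f 0 + f' 0 + c / 2 := by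
  set φ : ℝ → ℝ := fun t => f t - t * f' 0 - c / 2 * t ^ 2
  have hφ : ∀ t ∈ Set.Icc (0 : ℝ) 1, HasDerivAt φ (f' t - f' 0 - c * t) t := fun t ht => by
    have hlin : HasDerivAt (fun s => s * f' 0) (f' 0) t := by
      simpa using (hasDerivAt_id t).mul_const (f' 0)
    have hquad : HasDerivAt (fun s => c / 2 * s ^ 2) (c * t) t :=
      ((hasDerivAt_pow 2 t).const_mul (c / 2)).congr_deriv (by norm_num; ring)
    exact ((hf t ht).sub hlin).sub hquad
  have hanti : AntitoneOn φ (Set.Icc 0 1) := by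
    refine antitoneOn_of_hasDerivWithinAt_nonpos (f' := fun t => f' t - f' 0 - c * t)
      (convex_Icc 0 1) (fun t ht => (hφ t ht).continuousAt.continuousWithinAt)
      (fun t ht => ?_) (fun t ht => ?_)
    · exact (hφ t (interior_subset ht)).hasDerivWithinAt
    · rw [interior_Icc] at ht
      linarith [hf' t ht]
  have := hanti (by simp) (by simp) zero_le_one
  simp only [φ] at this
  linarith

namespace IsNorm

variable {d : ℕ} {N : EuclideanSpace ℝ (Fin d) → ℝ}

theorem map_zero (hN : IsNorm N) : N 0 = 0 :=
  (hN.1 0).mpr rfl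

theorem map_neg (hN : IsNorm N) (x : EuclideanSpace ℝ (Fin d)) : N (-x) = N x := by
  simpa using hN.2.1 (-1) x

theorem nonneg (hN : IsNorm N) (x : EuclideanSpace ℝ (Fin d)) : 0 ≤ N x := by
  have := hN.2.2 x (-x)
  rw [add_neg_cancel, hN.map_zero, hN.map_neg] at this
  linarith

theorem smul_add_smul_le (hN : IsNorm N) (a b : ℝ) (x y : EuclideanSpace ℝ (Fin d)) :
    N (a • x + b • y) ≤ |a| * N x + |b| * N y := by
  simpa only [hN.2.1] using hN.2.2 (a • x) (b • y)

end IsNorm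

namespace IsDualNorm

variable {d : ℕ} {N D : EuclideanSpace ℝ (Fin d) → ℝ}

theorem nonneg (hN : IsNorm N) (hD : IsDualNorm N D) (g : EuclideanSpace ℝ (Fin d)) :
    0 ≤ D g :=
  (hD g).2 ⟨0, by simp [hN.map_zero]⟩

theorem inner_le_mul (hN : IsNorm N) (hD : IsDualNorm N D) (g y : EuclideanSpace ℝ (Fin d)) :
    ⟪g, y⟫ ≤ D g * N y := by
  rcases eq_or_ne y 0 with rfl | hy
  · simp [hN.map_zero]
  have hNy : 0 < N y := (hN.nonneg y).lt_of_ne' (mt (hN.1 y).mp hy)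
  have hunit : N ((N y)⁻¹ • y) ≤ 1 := by
    rw [hN.2.1, abs_of_pos (inv_pos.mpr hNy), inv_mul_cancel₀ hNy.ne']
  have := (hD g).2 ⟨_, hunit, rfl⟩
  rw [real_inner_smul_right, inv_mul_le_iff₀ hNy] at this
  linarith

theorem le_add_inner_add_of_lipschitz (hN : IsNorm N) (hD : IsDualNorm N D) {H : ℝ}
    {f : EuclideanSpace ℝ (Fin d) → ℝ} {G : EuclideanSpace ℝ (Fin d) → EuclideanSpace ℝ (Fin d)}
    (hG : ∀ x, HasGradientAt f (G x) x) (hlip : ∀ x y, D (G x - G y) ≤ H * N (x - y))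
    (x y : EuclideanSpace ℝ (Fin d)) :
    f y ≤ f x + ⟪G x, y - x⟫ + H / 2 * N (y - x) ^ 2 := by
  have hderiv : ∀ t : ℝ, HasDerivAt (fun s : ℝ => f (AffineMap.lineMap x y s))
      ⟪G (AffineMap.lineMap x y t), y - x⟫ t :=
    fun t => (hG _).hasDerivAt_comp_lineMap
  have hgrowth : ∀ t ∈ Set.Ioo (0 : ℝ) 1, ⟪G (AffineMap.lineMap x y t), y - x⟫ -
      ⟪G (AffineMap.lineMap x y (0 : ℝ)), y - x⟫ ≤ H * N (y - x) ^ 2 * t := by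
    intro t ht
    rw [AffineMap.lineMap_apply_zero, ← inner_sub_left]
    calc ⟪G (AffineMap.lineMap x y t) - G x, y - x⟫
        ≤ D (G (AffineMap.lineMap x y t) - G x) * N (y - x) := hD.inner_le_mul hN _ _
      _ ≤ H * N (AffineMap.lineMap x y t - x) * N (y - x) :=
          mul_le_mul_of_nonneg_right (hlip _ _) (hN.nonneg _)
      _ = H * N (y - x) ^ 2 * t := by
          rw [AffineMap.lineMap_apply_module', add_sub_cancel_right, hN.2.1, abs_of_pos ht.1]
          ring
  have := le_add_deriv_add_half_of_deriv_sub_le (fun t _ => hderiv t) hgrowth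
  simp only [AffineMap.lineMap_apply_zero, AffineMap.lineMap_apply_one] at this
  linarith

/-- The Frank–Wolfe duality-gap bound on the `N`-ball of radius `r`. -/
theorem sub_le_inner_add_mul_of_convexOn (hN : IsNorm N) (hD : IsDualNorm N D)
    {f : EuclideanSpace ℝ (Fin d) → ℝ} {g x y : EuclideanSpace ℝ (Fin d)} {r : ℝ}
    (hf : ConvexOn ℝ Set.univ f) (hg : HasGradientAt f g x) (hy : N y ≤ r) :
    f x - f y ≤ ⟪g, x⟫ + r * D g := by
  have hconv := hf.add_inner_le_of_hasGradientAt (Set.mem_univ x) (Set.mem_univ y) hg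
  have hpair : -⟪g, y⟫ ≤ D g * N y := by
    simpa [hN.map_neg, inner_neg_right] using hD.inner_le_mul hN g (-y)
  have hball : D g * N y ≤ r * D g := by
    rw [mul_comm r]; exact mul_le_mul_of_nonneg_left hy (hD.nonneg hN g)
  rw [inner_sub_right] at hconv
  linarith

end IsDualNorm

theorem nsd_wd_descent_lemma_general {d : ℕ} (N D : EuclideanSpace ℝ (Fin d) → ℝ)
    (hN : IsNorm N) (hD : IsDualNorm N D) (H lam η : ℝ) (hH : 0 < H) (hlam : 0 < lam)
    (hη : 0 < lam * η)
    (L : EuclideanSpace ℝ (Fin d) → ℝ) (G : EuclideanSpace ℝ (Fin d) → EuclideanSpace ℝ (Fin d))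
    (hG : ∀ x, HasGradientAt L (G x) x)
    (hconv : ConvexOn ℝ Set.univ L)
    (hlip : ∀ x y, D (G x - G y) ≤ H * N (x - y))
    (xstar xprev Δ : EuclideanSpace ℝ (Fin d))
    (hstar_ball : N xstar ≤ 1 / lam)
    (hΔnorm : N Δ = 1) (hΔsd : ⟪Δ, G xprev⟫ = D (G xprev)) :
    L ((1 - lam * η) • xprev - η • Δ) - L xstar ≤
      (1 - lam * η) * (L xprev - L xstar) + H / 2 * η ^ 2 * (1 + lam * N xprev) ^ 2 := by
  have hη0 : 0 < η := pos_of_mul_pos_right hη hlam.le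
  set x := (1 - lam * η) • xprev - η • Δ
  have hstep : x - xprev = (-(lam * η)) • xprev + (-η) • Δ := by module
  have hdescent := hD.le_add_inner_add_of_lipschitz hN hG hlip xprev x
  have hstep_norm : N (x - xprev) ≤ η * (1 + lam * N xprev) := by
    have := hN.smul_add_smul_le (-(lam * η)) (-η) xprev Δ
    rw [← hstep, abs_neg, abs_neg, abs_of_pos hη, abs_of_pos hη0, hΔnorm] at this
    linarith
  have hinner : ⟪G xprev, x - xprev⟫ = -(lam * η) * ⟪G xprev, xprev⟫ - η * D (G xprev) := by
    rw [hstep, inner_add_right, real_inner_smul_right, real_inner_smul_right,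
      real_inner_comm Δ, hΔsd]
    ring
  have hgap := hD.sub_le_inner_add_mul_of_convexOn hN hconv (hG xprev) hstar_ball
  have hgap' : lam * η * (L xprev - L xstar) ≤ lam * η * ⟪G xprev, xprev⟫ + η * D (G xprev) :=
    calc lam * η * (L xprev - L xstar)
        ≤ lam * η * (⟪G xprev, xprev⟫ + 1 / lam * D (G xprev)) :=
          mul_le_mul_of_nonneg_left hgap hη.le
      _ = lam * η * ⟪G xprev, xprev⟫ + η * D (G xprev) := by field_simp
  have hsq : N (x - xprev) ^ 2 ≤ η ^ 2 * (1 + lam * N xprev) ^ 2 := by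
    rw [← mul_pow]; exact pow_le_pow_left₀ (hN.nonneg _) hstep_norm 2
  have hquad := mul_le_mul_of_nonneg_left hsq (half_pos hH).le
  linarith

/-- descent lemma for normalized steepest descent with weight decay. If `L` is
convex with `H`-Lipschitz gradient w.r.t. the norm `N` (dual norm `D`), `x*` minimizes `L`
over the ball `{N ≤ 1/λ}`, and `Δ` is a unit-norm steepest descent direction at `xprev`, then
`L(x_t) - L(x*) ≤ (1 - λη)(L(xprev) - L(x*)) + (H/2) η² (1 + λ N(xprev))²` where
`x_t = (1 - λη) • xprev - η • Δ`. -/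
theorem nsd_wd_descent_lemma {d : ℕ} (N D : EuclideanSpace ℝ (Fin d) → ℝ)
    (hN : IsNorm N) (hD : IsDualNorm N D) (H lam η : ℝ) (hH : 0 < H) (hlam : 0 < lam)
    (hη : 0 < lam * η) (hη' : lam * η ≤ 1)
    (L : EuclideanSpace ℝ (Fin d) → ℝ) (G : EuclideanSpace ℝ (Fin d) → EuclideanSpace ℝ (Fin d))
    (hG : ∀ x, HasGradientAt L (G x) x)
    (hconv : ConvexOn ℝ Set.univ L)
    (hlip : ∀ x y, D (G x - G y) ≤ H * N (x - y))
    (xstar xprev Δ : EuclideanSpace ℝ (Fin d))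
    (hstar_ball : N xstar ≤ 1 / lam) (hstar_min : ∀ y, N y ≤ 1 / lam → L xstar ≤ L y)
    (hΔnorm : N Δ = 1) (hΔsd : ⟪Δ, G xprev⟫ = D (G xprev)) :
    L ((1 - lam * η) • xprev - η • Δ) - L xstar ≤
      (1 - lam * η) * (L xprev - L xstar) + H / 2 * η ^ 2 * (1 + lam * N xprev) ^ 2 :=
  nsd_wd_descent_lemma_general N D hN hD H lam η hH hlam hη L G hG hconv hlip xstar xprev Δ
    hstar_ball hΔnorm hΔsd
end

section
/- Implicit bias of normalized steepest descent with weight decay: for continuously differentiable L : ℝ^d → ℝ, positive step sizes with Σ_{t=1}^∞ η_t = ∞, if the iterates x_t = (1 − λη_t)x_{t−1} − η_t Δ_t (with Δ_t a steepest descent direction: ‖Δ_t‖ = 1, ⟨Δ_t, ∇L(x_{t−1})⟩ = ‖∇L(x_{t−1})‖_*) converge to some x_∞, then ‖x_∞‖ ≤ 1/λ and ⟨−λx_∞, ∇L(x_∞)⟩ = ‖∇L(x_∞)‖_*, i.e., x_∞ is a KKT point of min_{‖x‖ ≤ 1/λ} L(x). -/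
open scoped RealInnerProductSpace BigOperators
open Filter Finset

/-!
Both claims come from one principle: if `v T - v (T - 1) ≤ -η T * u T` with `u T → l`, `v`
convergent and `∑ η T = ∞`, then `l ≤ 0`, since otherwise `v` would decrease to `-∞`.
Applied to `v T = N (x T)`, for which the triangle inequality gives
`v T - v (T - 1) ≤ -η T * (λ v (T - 1) - 1)`, it yields `λ N x_∞ ≤ 1`. Applied in both
directions to `v T = ⟪x T, G x_∞⟫`, where exactly
`v T - v (T - 1) = -η T * (λ v (T - 1) + ⟪Δ T, G x_∞⟫)`, it yields
`λ ⟪x_∞, G x_∞⟫ + D (G x_∞) = 0`, because `⟪Δ T, G x_∞⟫ → D (G x_∞)` by continuity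
of `G` and of `D` (a finite convex function on `ℝ^d`, like `N`).
-/

open Topology

section Descent

variable {η u v : ℕ → ℝ}

theorem tendsto_atBot_of_sub_le_neg_mul {c : ℝ} (hc : 0 < c)
    (hdiv : Tendsto (fun T => ∑ t ∈ Icc 1 T, η t) atTop atTop) (T₀ : ℕ)
    (hstep : ∀ T, T₀ < T → v T - v (T - 1) ≤ -(c * η T)) :
    Tendsto v atTop atBot := by
  set A : ℕ → ℝ := fun T => ∑ t ∈ Icc 1 T, η t
  have hbound : ∀ T, T₀ ≤ T → v T ≤ v T₀ + c * A T₀ - c * A T := by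
    intro T hT
    induction T, hT using Nat.le_induction with
    | base => linarith
    | succ T hT ih =>
      have hA : A (T + 1) = A T + η (T + 1) := sum_Icc_succ_top (by omega) η
      have := hstep (T + 1) (by omega)
      rw [Nat.add_sub_cancel] at this
      rw [hA]
      linarith
  have hlim : Tendsto (fun T => v T₀ + c * A T₀ + -(c * A T)) atTop atBot :=
    tendsto_atBot_add_const_left _ _ (tendsto_neg_atTop_atBot.comp (hdiv.const_mul_atTop hc))
  exact tendsto_atBot_mono' atTop (eventually_atTop.2 ⟨T₀, hbound⟩) hlim

theorem nonpos_of_tendsto_of_sub_le_neg_mul {l l' : ℝ} (hη : ∀ t, 1 ≤ t → 0 ≤ η t)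
    (hdiv : Tendsto (fun T => ∑ t ∈ Icc 1 T, η t) atTop atTop)
    (hu : Tendsto u atTop (𝓝 l)) (hv : Tendsto v atTop (𝓝 l'))
    (hstep : ∀ T, 1 ≤ T → v T - v (T - 1) ≤ -(η T * u T)) : l ≤ 0 := by
  by_contra! hl
  obtain ⟨T₀, hT₀⟩ := eventually_atTop.1 (hu.eventually (eventually_ge_nhds (half_lt_self hl)))
  refine not_tendsto_atBot_of_tendsto_nhds hv
    (tendsto_atBot_of_sub_le_neg_mul (half_pos hl) hdiv T₀ fun T hT => ?_)
  have hu' := mul_le_mul_of_nonneg_left (hT₀ T hT.le) (hη T (by omega))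
  linarith [hstep T (by omega)]

theorem eq_zero_of_tendsto_of_sub_eq_neg_mul {l l' : ℝ} (hη : ∀ t, 1 ≤ t → 0 ≤ η t)
    (hdiv : Tendsto (fun T => ∑ t ∈ Icc 1 T, η t) atTop atTop)
    (hu : Tendsto u atTop (𝓝 l)) (hv : Tendsto v atTop (𝓝 l'))
    (hstep : ∀ T, 1 ≤ T → v T - v (T - 1) = -(η T * u T)) : l = 0 := by
  have hle := nonpos_of_tendsto_of_sub_le_neg_mul hη hdiv hu hv fun T hT => (hstep T hT).le
  have hge := nonpos_of_tendsto_of_sub_le_neg_mul hη hdiv hu.neg hv.neg fun T hT => by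
    linarith [hstep T hT]
  linarith

end Descent

section Norms

variable {d : ℕ} {N D : EuclideanSpace ℝ (Fin d) → ℝ}

theorem IsNorm.smul_sub_smul_le (hN : IsNorm N) {a b : ℝ} (ha : 0 ≤ a) (hb : 0 ≤ b)
    (x y : EuclideanSpace ℝ (Fin d)) : N (a • x - b • y) ≤ a * N x + b * N y := by
  have := hN.2.2 (a • x) ((-b) • y)
  rwa [hN.2.1, hN.2.1, abs_neg, abs_of_nonneg ha, abs_of_nonneg hb, neg_smul,
    ← sub_eq_add_neg] at this

theorem IsNorm.convexOn (hN : IsNorm N) : ConvexOn ℝ Set.univ N := by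
  refine ⟨convex_univ, fun x _ y _ a b ha hb _ => ?_⟩
  have := hN.2.2 (a • x) (b • y)
  rwa [hN.2.1, hN.2.1, abs_of_nonneg ha, abs_of_nonneg hb] at this

theorem IsNorm.continuous (hN : IsNorm N) : Continuous N :=
  continuousOn_univ.1 (hN.convexOn.continuousOn isOpen_univ)

theorem IsDualNorm.inner_le (hD : IsDualNorm N D) (g : EuclideanSpace ℝ (Fin d))
    {w : EuclideanSpace ℝ (Fin d)} (hw : N w ≤ 1) : ⟪g, w⟫ ≤ D g :=
  (hD g).2 ⟨w, hw, rfl⟩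

theorem IsDualNorm.apply_zero (hD : IsDualNorm N D) : D 0 = 0 := by
  obtain ⟨w, -, hw⟩ := (hD 0).1
  rwa [inner_zero_left] at hw

theorem IsDualNorm.convexOn (hD : IsDualNorm N D) : ConvexOn ℝ Set.univ D := by
  refine ⟨convex_univ, fun g _ g' _ a b ha hb _ => ?_⟩
  obtain ⟨w, hw, hDw⟩ := (hD (a • g + b • g')).1
  rw [hDw, inner_add_left, real_inner_smul_left, real_inner_smul_left, smul_eq_mul, smul_eq_mul]
  gcongr
  exacts [hD.inner_le g hw, hD.inner_le g' hw]

theorem IsDualNorm.continuous (hD : IsDualNorm N D) : Continuous D :=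
  continuousOn_univ.1 (hD.convexOn.continuousOn isOpen_univ)

theorem IsDualNorm.tendsto_inner_of_inner_eq (hD : IsDualNorm N D)
    {Δ g : ℕ → EuclideanSpace ℝ (Fin d)} {γ : EuclideanSpace ℝ (Fin d)}
    (hg : Tendsto g atTop (𝓝 γ)) (hΔN : ∀ᶠ T in atTop, N (Δ T) ≤ 1)
    (hΔ : ∀ᶠ T in atTop, ⟪Δ T, g T⟫ = D (g T)) :
    Tendsto (fun T => ⟪Δ T, γ⟫) atTop (𝓝 (D γ)) := by
  have hlower : Tendsto (fun T => D (g T) - D (g T - γ)) atTop (𝓝 (D γ)) := by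
    have := ((hD.continuous.tendsto γ).comp hg).sub
      ((hD.continuous.tendsto 0).comp (by simpa using hg.sub_const γ))
    simpa [hD.apply_zero] using this
  refine tendsto_of_tendsto_of_tendsto_of_le_of_le' hlower tendsto_const_nhds ?_ ?_
  · filter_upwards [hΔN, hΔ] with T hN hΔ
    have := hD.inner_le (g T - γ) hN
    rw [inner_sub_left, real_inner_comm, hΔ, real_inner_comm] at this
    linarith
  · filter_upwards [hΔN] with T hN
    rw [real_inner_comm]
    exact hD.inner_le γ hN

end Norms

theorem nsd_wd_converges_to_kkt_general {d : ℕ} (N D : EuclideanSpace ℝ (Fin d) → ℝ)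
    (hN : IsNorm N) (hD : IsDualNorm N D) (lam : ℝ) (hlam : 0 < lam)
    (G : EuclideanSpace ℝ (Fin d) → EuclideanSpace ℝ (Fin d))
    (hGcont : Continuous G)
    (η : ℕ → ℝ) (hη : ∀ t, 1 ≤ t → 0 < η t) (hη' : ∀ t, 1 ≤ t → lam * η t < 1)
    (hdiv : Filter.Tendsto (fun T => ∑ t ∈ Finset.Icc 1 T, η t) Filter.atTop Filter.atTop)
    (x Δ : ℕ → EuclideanSpace ℝ (Fin d)) (xinf : EuclideanSpace ℝ (Fin d))
    (hΔnorm : ∀ t, 1 ≤ t → N (Δ t) = 1)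
    (hΔsd : ∀ t, 1 ≤ t → ⟪Δ t, G (x (t - 1))⟫ = D (G (x (t - 1))))
    (hx : ∀ t, 1 ≤ t → x t = (1 - lam * η t) • x (t - 1) - η t • Δ t)
    (hxconv : Filter.Tendsto x Filter.atTop (nhds xinf)) :
    N xinf ≤ 1 / lam ∧ ⟪-(lam • xinf), G xinf⟫ = D (G xinf) := by
  have hη₀ : ∀ t, 1 ≤ t → 0 ≤ η t := fun t ht => (hη t ht).le
  have hprev : Tendsto (fun T => x (T - 1)) atTop (𝓝 xinf) :=
    hxconv.comp (tendsto_sub_atTop_nat 1)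
  have hball : lam * N xinf - 1 ≤ 0 := by
    refine nonpos_of_tendsto_of_sub_le_neg_mul hη₀ hdiv
      ((((hN.continuous.tendsto xinf).comp hprev).const_mul lam).sub_const 1)
      ((hN.continuous.tendsto xinf).comp hxconv) fun T hT => ?_
    have := hN.smul_sub_smul_le (a := 1 - lam * η T) (by linarith [hη' T hT]) (hη₀ T hT)
      (x (T - 1)) (Δ T)
    rw [← hx T hT, hΔnorm T hT] at this
    simp only [Function.comp_apply]
    linarith
  refine ⟨by rw [le_div_iff₀ hlam]; linarith, ?_⟩
  have hΔ : Tendsto (fun T => ⟪Δ T, G xinf⟫) atTop (𝓝 (D (G xinf))) :=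
    hD.tendsto_inner_of_inner_eq ((hGcont.tendsto xinf).comp hprev)
      (eventually_atTop.2 ⟨1, fun T hT => (hΔnorm T hT).le⟩) (eventually_atTop.2 ⟨1, hΔsd⟩)
  have hkkt : lam * ⟪xinf, G xinf⟫ + D (G xinf) = 0 := by
    refine eq_zero_of_tendsto_of_sub_eq_neg_mul hη₀ hdiv
      (((hprev.inner tendsto_const_nhds).const_mul lam).add hΔ)
      (hxconv.inner (tendsto_const_nhds (x := G xinf))) fun T hT => ?_
    rw [hx T hT, inner_sub_left, real_inner_smul_left, real_inner_smul_left]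
    ring
  rw [inner_neg_left, real_inner_smul_left]
  linarith

/-- implicit bias of normalized steepest descent with weight decay. If the
iterates converge to `x_∞`, then `N x_∞ ≤ 1/λ` and `⟪-λ x_∞, ∇L(x_∞)⟫ = ‖∇L(x_∞)‖_*`,
i.e. `x_∞` is a KKT point of `min_{N x ≤ 1/λ} L(x)`. -/
theorem nsd_wd_converges_to_kkt {d : ℕ} (N D : EuclideanSpace ℝ (Fin d) → ℝ)
    (hN : IsNorm N) (hD : IsDualNorm N D) (lam : ℝ) (hlam : 0 < lam)
    (L : EuclideanSpace ℝ (Fin d) → ℝ) (G : EuclideanSpace ℝ (Fin d) → EuclideanSpace ℝ (Fin d))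
    (hG : ∀ y, HasGradientAt L (G y) y) (hGcont : Continuous G)
    (η : ℕ → ℝ) (hη : ∀ t, 1 ≤ t → 0 < η t) (hη' : ∀ t, 1 ≤ t → lam * η t < 1)
    (hdiv : Filter.Tendsto (fun T => ∑ t ∈ Finset.Icc 1 T, η t) Filter.atTop Filter.atTop)
    (x Δ : ℕ → EuclideanSpace ℝ (Fin d)) (xinf : EuclideanSpace ℝ (Fin d))
    (hΔnorm : ∀ t, 1 ≤ t → N (Δ t) = 1)
    (hΔsd : ∀ t, 1 ≤ t → ⟪Δ t, G (x (t - 1))⟫ = D (G (x (t - 1))))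
    (hx : ∀ t, 1 ≤ t → x t = (1 - lam * η t) • x (t - 1) - η t • Δ t)
    (hxconv : Filter.Tendsto x Filter.atTop (nhds xinf)) :
    N xinf ≤ 1 / lam ∧ ⟪-(lam • xinf), G xinf⟫ = D (G xinf) :=
  nsd_wd_converges_to_kkt_general N D hN hD lam hlam G hGcont η hη hη' hdiv x Δ xinf hΔnorm hΔsd hx
    hxconv
end
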